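/- arXiv:2502.00901 — 3 statements merged into one kernel-verified Lean document; each statement's English description precedes it below -/
import Mathlib

section
/- Let Q be a symmetric P×P real matrix and n a natural number. Consider the (n+1)P × (n+1)P block matrix M whose (a,a) diagonal blocks equal I_P and whose (a,b) off-diagonal blocks (a ≠ b) all equal Q, i.e. M = I_{n+1} ⊗ (I_P − Q) + J_{n+1} ⊗ Q where J_{n+1} is the all-ones (n+1)×(n+1) matrix. Then det(M) = det(I_P − Q)^n · det(I_P + n·Q). -/
open Matrix Kronecker

/-- Replica-symmetric block determinant identity:
`det(I_{n+1} ⊗ (I_P − Q) + J_{n+1} ⊗ Q) = det(I_P − Q)^n · det(I_P + n Q)`. -/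
theorem replica_symmetric_det (P n : ℕ) (Q : Matrix (Fin P) (Fin P) ℝ) (hQ : Q.IsSymm) :
    ((1 : Matrix (Fin (n + 1)) (Fin (n + 1)) ℝ) ⊗ₖ ((1 : Matrix (Fin P) (Fin P) ℝ) - Q)
        + (Matrix.of fun _ _ => (1 : ℝ)) ⊗ₖ Q).det
      = ((1 : Matrix (Fin P) (Fin P) ℝ) - Q).det ^ n
        * ((1 : Matrix (Fin P) (Fin P) ℝ) + (n : ℝ) • Q).det := by
  set A : Matrix (Fin P) (Fin P) ℝ := 1 - Q with hA
  set J : Matrix (Fin (n + 1)) (Fin (n + 1)) ℝ := Matrix.of fun _ _ => (1 : ℝ) with hJ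
  have hn : ((n : ℝ) + 1) ≠ 0 := by positivity
  set S : Matrix (Fin (n + 1)) (Fin (n + 1)) ℝ :=
    Matrix.of fun i j => if i = 0 then (1 : ℝ) else
      (if j = 0 then -1 else 0) + (if j = i then 1 else 0) with hS
  set c : Fin (n + 1) → ℝ := fun k => if k = 0 then ((n : ℝ) + 1)⁻¹ else -((n : ℝ) + 1)⁻¹ with hc
  set T : Matrix (Fin (n + 1)) (Fin (n + 1)) ℝ :=
    Matrix.of fun j k => c k + (if j = k ∧ j ≠ 0 then 1 else 0) with hT
  have hsumT : ∀ k, (∑ j, T j k) = if k = 0 then 1 else 0 := by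
    intro k
    simp only [hT, Matrix.of_apply, Finset.sum_add_distrib, Finset.sum_const,
      Finset.card_univ, Fintype.card_fin, nsmul_eq_mul]
    rcases eq_or_ne k 0 with hk | hk
    · subst hk
      have h0 : ∀ j : Fin (n + 1), (if j = (0 : Fin (n + 1)) ∧ j ≠ 0 then (1 : ℝ) else 0) = 0 :=
        fun j => if_neg (fun h => h.2 h.1)
      simp only [h0, Finset.sum_const_zero, add_zero, if_pos rfl, hc]
      push_cast
      field_simp
    · have h1 : ∀ j : Fin (n + 1),
          (if j = k ∧ j ≠ 0 then (1 : ℝ) else 0) = if j = k then 1 else 0 := by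
        intro j
        rcases eq_or_ne j k with h | h
        · subst h; simp [hk]
        · simp [h]
      simp only [h1, Finset.sum_ite_eq', Finset.mem_univ, if_true, if_neg hk, hc]
      push_cast
      field_simp
      ring
  have hST : S * T = 1 := by
    ext i k
    rw [Matrix.mul_apply]
    rcases eq_or_ne i 0 with hi | hi
    · subst hi
      have h2 : ∀ j : Fin (n + 1), S 0 j * T j k = T j k := by
        intro j; simp [hS]
      rw [Finset.sum_congr rfl fun j _ => h2 j, hsumT]
      simp [Matrix.one_apply, eq_comm]
    · have h3 : ∀ j : Fin (n + 1), S i j * T j k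
          = (if j = 0 then -T j k else 0) + (if j = i then T j k else 0) := by
        intro j
        simp only [hS, Matrix.of_apply, hi, if_false, add_mul]
        congr 1 <;> split <;> simp [neg_mul]
      rw [Finset.sum_congr rfl fun j _ => h3 j, Finset.sum_add_distrib]
      simp only [Finset.sum_ite_eq', Finset.mem_univ, if_true]
      simp only [hT, Matrix.of_apply, Matrix.one_apply]
      rcases eq_or_ne i k with h | h
      · subst h
        simp [hi]
      · simp [h, hi, Ne.symm]
  set d : Fin (n + 1) → ℝ := fun i => if i = 0 then ((n : ℝ) + 1) else 0 with hd
  have hSJT : S * J * T = Matrix.diagonal d := by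
    ext i k
    rw [Matrix.mul_apply]
    have hSJ : ∀ j, (S * J) i j = if i = 0 then ((n : ℝ) + 1) else 0 := by
      intro j
      rw [Matrix.mul_apply]
      rcases eq_or_ne i 0 with hi | hi
      · subst hi
        have h4a : ∀ l : Fin (n + 1), S 0 l * J l j = 1 := by
          intro l; simp [hS, hJ]
        rw [Finset.sum_congr rfl fun l _ => h4a l, Finset.sum_const, Finset.card_univ,
          Fintype.card_fin, nsmul_eq_mul, mul_one, if_pos rfl]
        push_cast; ring
      · have h4 : ∀ l : Fin (n + 1), S i l * J l j
            = (if l = 0 then (-1 : ℝ) else 0) + (if l = i then 1 else 0) := by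
          intro l; simp [hS, hJ, hi]
        rw [Finset.sum_congr rfl fun l _ => h4 l, Finset.sum_add_distrib]
        simp [hi]
    simp only [hSJ]
    rcases eq_or_ne i 0 with hi | hi
    · subst hi
      simp only [if_pos rfl]
      rw [← Finset.mul_sum, hsumT]
      rcases eq_or_ne k 0 with hk | hk
      · subst hk; simp [Matrix.diagonal_apply, hd]
      · simp [Matrix.diagonal_apply, hd, hk, Ne.symm hk]
    · simp [hi, Matrix.diagonal_apply, hd]
  have hdet1 : ((S ⊗ₖ (1 : Matrix (Fin P) (Fin P) ℝ)) * (1 ⊗ₖ A + J ⊗ₖ Q)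
      * (T ⊗ₖ (1 : Matrix (Fin P) (Fin P) ℝ))).det = (1 ⊗ₖ A + J ⊗ₖ Q).det := by
    have h5 : (S ⊗ₖ (1 : Matrix (Fin P) (Fin P) ℝ)).det
        * (T ⊗ₖ (1 : Matrix (Fin P) (Fin P) ℝ)).det = 1 := by
      rw [← Matrix.det_mul, ← Matrix.mul_kronecker_mul, hST, Matrix.one_mul,
        Matrix.one_kronecker_one, Matrix.det_one]
    rw [Matrix.det_mul, Matrix.det_mul]
    calc (S ⊗ₖ (1 : Matrix (Fin P) (Fin P) ℝ)).det * (1 ⊗ₖ A + J ⊗ₖ Q).det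
          * (T ⊗ₖ (1 : Matrix (Fin P) (Fin P) ℝ)).det
        = (1 ⊗ₖ A + J ⊗ₖ Q).det * ((S ⊗ₖ (1 : Matrix (Fin P) (Fin P) ℝ)).det
          * (T ⊗ₖ (1 : Matrix (Fin P) (Fin P) ℝ)).det) := by ring
      _ = (1 ⊗ₖ A + J ⊗ₖ Q).det := by rw [h5, mul_one]
  have hconj : (S ⊗ₖ (1 : Matrix (Fin P) (Fin P) ℝ)) * (1 ⊗ₖ A + J ⊗ₖ Q)
      * (T ⊗ₖ (1 : Matrix (Fin P) (Fin P) ℝ))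
      = 1 ⊗ₖ A + (Matrix.diagonal d) ⊗ₖ Q := by
    rw [Matrix.mul_add, Matrix.add_mul]
    congr 1
    · rw [← Matrix.mul_kronecker_mul, ← Matrix.mul_kronecker_mul]
      simp only [Matrix.mul_one, Matrix.one_mul]
      rw [hST]
    · rw [← Matrix.mul_kronecker_mul, ← Matrix.mul_kronecker_mul]
      simp only [Matrix.mul_one, Matrix.one_mul]
      rw [hSJT]
  have hblock : (1 : Matrix (Fin (n + 1)) (Fin (n + 1)) ℝ) ⊗ₖ A + (Matrix.diagonal d) ⊗ₖ Q
      = (Matrix.blockDiagonal fun i => A + d i • Q).submatrix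
        (Equiv.prodComm (Fin (n + 1)) (Fin P)) (Equiv.prodComm (Fin (n + 1)) (Fin P)) := by
    ext ⟨i, p⟩ ⟨j, q⟩
    simp only [Matrix.add_apply, Matrix.kroneckerMap_apply, Matrix.submatrix_apply,
      Equiv.prodComm_apply, Prod.swap_prod_mk, Matrix.blockDiagonal_apply,
      Matrix.one_apply, Matrix.diagonal_apply, Matrix.smul_apply, smul_eq_mul]
    rcases eq_or_ne i j with h | h
    · subst h; simp
    · simp [h]
  rw [← hdet1, hconj, hblock, Matrix.det_submatrix_equiv_self, Matrix.det_blockDiagonal]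
  have hd0 : d 0 = (n : ℝ) + 1 := by simp [hd]
  have hA0 : A + d 0 • Q = 1 + (n : ℝ) • Q := by
    rw [hd0, hA]
    ext p q
    simp only [Matrix.add_apply, Matrix.sub_apply, Matrix.smul_apply, smul_eq_mul]
    ring
  have hAs : ∀ i : Fin n, A + d i.succ • Q = A := by
    intro i; simp [hd, Fin.succ_ne_zero]
  rw [Fin.prod_univ_succ]
  simp only [hA0, hAs, Finset.prod_const, Finset.card_univ, Fintype.card_fin]
  ring
end

section
/- Let Q be a symmetric P×P real matrix and n ≥ 1 such that I_P − Q and I_P + nQ are invertible. Then the block matrix M = I_{n+1} ⊗ (I_P − Q) + J_{n+1} ⊗ Q is invertible, its diagonal P×P blocks of M^{-1} equal (I_P − Q)^{-1}(I_P + (n−1)Q)(I_P + nQ)^{-1}, and its off-diagonal P×P blocks equal −(I_P − Q)^{-1} Q (I_P + nQ)^{-1}. -/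
open Matrix Kronecker

/-- Replica-symmetric block inverse identities: if `I_P − Q` and `I_P + nQ` are invertible
(`n ≥ 1`), then `M = I_{n+1} ⊗ (I_P − Q) + J_{n+1} ⊗ Q` is invertible, with diagonal blocks
of `M⁻¹` equal to `(I−Q)⁻¹(I+(n−1)Q)(I+nQ)⁻¹` and off-diagonal blocks `−(I−Q)⁻¹Q(I+nQ)⁻¹`. -/
theorem replica_symmetric_inverse_blocks (P n : ℕ) (hn : 1 ≤ n)
    (Q : Matrix (Fin P) (Fin P) ℝ) (hQ : Q.IsSymm)
    (h1 : IsUnit ((1 : Matrix (Fin P) (Fin P) ℝ) - Q))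
    (h2 : IsUnit ((1 : Matrix (Fin P) (Fin P) ℝ) + (n : ℝ) • Q))
    (Mb : Matrix (Fin (n + 1) × Fin P) (Fin (n + 1) × Fin P) ℝ)
    (hMb : Mb = (1 : Matrix (Fin (n + 1)) (Fin (n + 1)) ℝ) ⊗ₖ ((1 : Matrix (Fin P) (Fin P) ℝ) - Q)
        + (Matrix.of fun _ _ => (1 : ℝ)) ⊗ₖ Q) :
    IsUnit Mb ∧
    ∀ (a b : Fin (n + 1)) (p q : Fin P),
      Mb⁻¹ (a, p) (b, q)
        = if a = b then
            (((1 : Matrix (Fin P) (Fin P) ℝ) - Q)⁻¹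
              * ((1 : Matrix (Fin P) (Fin P) ℝ) + ((n : ℝ) - 1) • Q)
              * ((1 : Matrix (Fin P) (Fin P) ℝ) + (n : ℝ) • Q)⁻¹) p q
          else
            (-(((1 : Matrix (Fin P) (Fin P) ℝ) - Q)⁻¹ * Q
              * ((1 : Matrix (Fin P) (Fin P) ℝ) + (n : ℝ) • Q)⁻¹)) p q := by
  classical
  set C : Matrix (Fin P) (Fin P) ℝ := (1 : Matrix (Fin P) (Fin P) ℝ) - Q with hCdef
  set D : Matrix (Fin P) (Fin P) ℝ := (1 : Matrix (Fin P) (Fin P) ℝ) + (n : ℝ) • Q with hDdef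
  have hC1 : C * C⁻¹ = 1 := Matrix.mul_nonsing_inv C ((Matrix.isUnit_iff_isUnit_det C).mp h1)
  have hC2 : C⁻¹ * C = 1 := Matrix.nonsing_inv_mul C ((Matrix.isUnit_iff_isUnit_det C).mp h1)
  have hD1 : D * D⁻¹ = 1 := Matrix.mul_nonsing_inv D ((Matrix.isUnit_iff_isUnit_det D).mp h2)
  have hD2 : D⁻¹ * D = 1 := Matrix.nonsing_inv_mul D ((Matrix.isUnit_iff_isUnit_det D).mp h2)
  set A : Matrix (Fin P) (Fin P) ℝ :=
    C⁻¹ * ((1 : Matrix (Fin P) (Fin P) ℝ) + ((n : ℝ) - 1) • Q) * D⁻¹ with hAdef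
  set B : Matrix (Fin P) (Fin P) ℝ := -(C⁻¹ * Q * D⁻¹) with hBdef
  have hAB : A - B = C⁻¹ := by
    have key : ((1 : Matrix (Fin P) (Fin P) ℝ) + ((n : ℝ) - 1) • Q) + Q = D := by
      rw [hDdef, sub_smul, one_smul]; abel
    calc A - B
        = C⁻¹ * (((1 : Matrix (Fin P) (Fin P) ℝ) + ((n : ℝ) - 1) • Q) + Q) * D⁻¹ := by
          rw [hAdef, hBdef]; noncomm_ring
      _ = C⁻¹ * D * D⁻¹ := by rw [key]
      _ = C⁻¹ := by rw [Matrix.mul_assoc, hD1, Matrix.mul_one]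
  have hAnB : A + (n : ℝ) • B = D⁻¹ := by
    have key : ((1 : Matrix (Fin P) (Fin P) ℝ) + ((n : ℝ) - 1) • Q) - (n : ℝ) • Q = C := by
      rw [hCdef, sub_smul, one_smul]; abel
    calc A + (n : ℝ) • B
        = C⁻¹ * (((1 : Matrix (Fin P) (Fin P) ℝ) + ((n : ℝ) - 1) • Q) - (n : ℝ) • Q) * D⁻¹ := by
          rw [hAdef, hBdef]
          simp only [smul_neg, Matrix.mul_sub, Matrix.sub_mul, Matrix.smul_mul,
            Matrix.mul_smul]
          abel
      _ = C⁻¹ * C * D⁻¹ := by rw [key]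
      _ = D⁻¹ := by rw [hC2, Matrix.one_mul]
  have h3 : C * (A - B) = 1 := by rw [hAB, hC1]
  have hCB : C * B = -(Q * D⁻¹) := by
    rw [hBdef, Matrix.mul_neg, ← Matrix.mul_assoc, ← Matrix.mul_assoc, hC1, Matrix.one_mul]
  have h4 : C * B + (Q * (A - B) + ((n : ℝ) + 1) • (Q * B)) = 0 := by
    have hgrp : Q * (A - B) + ((n : ℝ) + 1) • (Q * B) = Q * (A + (n : ℝ) • B) := by
      rw [← mul_smul_comm, ← Matrix.mul_add]
      congr 1
      rw [add_smul, one_smul]; abel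
    rw [hgrp, hAnB, hCB]; abel
  set J : Matrix (Fin (n + 1)) (Fin (n + 1)) ℝ := Matrix.of fun _ _ => (1 : ℝ) with hJdef
  have hJJ : J * J = ((n : ℝ) + 1) • J := by
    ext i j
    simp [hJdef, Matrix.mul_apply]
  set N : Matrix (Fin (n + 1) × Fin P) (Fin (n + 1) × Fin P) ℝ :=
    (1 : Matrix (Fin (n + 1)) (Fin (n + 1)) ℝ) ⊗ₖ (A - B) + J ⊗ₖ B with hNdef
  have hMN : Mb * N = 1 := by
    rw [hMb, hNdef]
    rw [Matrix.add_mul, Matrix.mul_add, Matrix.mul_add]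
    rw [← Matrix.mul_kronecker_mul, ← Matrix.mul_kronecker_mul, ← Matrix.mul_kronecker_mul,
      ← Matrix.mul_kronecker_mul]
    simp only [Matrix.one_mul, Matrix.mul_one]
    rw [hJJ, Matrix.smul_kronecker, ← Matrix.kronecker_smul]
    rw [h3, add_assoc, ← Matrix.kronecker_add, ← Matrix.kronecker_add, h4,
      Matrix.kronecker_zero, add_zero, Matrix.one_kronecker_one]
  have hinv : Mb⁻¹ = N := Matrix.inv_eq_right_inv hMN
  refine ⟨(Matrix.isUnit_iff_isUnit_det Mb).mpr (Matrix.isUnit_det_of_right_inverse hMN), ?_⟩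
  intro a b p q
  rw [hinv, hNdef]
  simp only [Matrix.add_apply, Matrix.kroneckerMap_apply, Matrix.one_apply, hJdef,
    Matrix.of_apply, Matrix.sub_apply, Matrix.neg_apply]
  by_cases hab : a = b <;> simp [hab]
end

section
/- Fix M ≥ 1, L ≥ 1 and matrices Z₁,…,Z_{L−1} with Z_l ∈ ℝ^{P_l×M}, and let σ : ℝ^{M×M} → ℝ^{M×M} be continuously differentiable. For c > 0 define recursively B⁰_c = I_M and B^l_c = B^{l−1}_c(I_M + (1/c)σ((B^{l−1}_c)ᵀ Z_lᵀ Z_l B^{l−1}_c)) for 1 ≤ l ≤ L−1. Then for every 1 ≤ l ≤ L−1, the limit lim_{c→∞} c·(B^l_c − I_M) exists and equals A^l := Σ_{l'=1}^{l} σ(Z_{l'}ᵀ Z_{l'}). -/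
open Matrix

attribute [local instance] Matrix.normedAddCommGroup Matrix.normedSpace

/-- Rescaled mixing matrices with skip strength `c`:
`B⁰_c = I_M`, `B^l_c = B^{l−1}_c(I_M + (1/c)·σ((B^{l−1}_c)ᵀ Z_lᵀ Z_l B^{l−1}_c))`. -/
noncomputable def mixBskip (M : ℕ) (c : ℝ)
    (σ : Matrix (Fin M) (Fin M) ℝ → Matrix (Fin M) (Fin M) ℝ)
    (P : ℕ → ℕ) (Z : (l : ℕ) → Matrix (Fin (P l)) (Fin M) ℝ) :
    ℕ → Matrix (Fin M) (Fin M) ℝ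
  | 0 => 1
  | l + 1 =>
      mixBskip M c σ P Z l *
        ((1 : Matrix (Fin M) (Fin M) ℝ) +
          c⁻¹ • σ ((mixBskip M c σ P Z l)ᵀ * (Z (l + 1))ᵀ * Z (l + 1) * mixBskip M c σ P Z l))

open Filter Topology

/-! For `c ≠ 0` one has `c • (B * (1 + c⁻¹ • S) - 1) = c • (B - 1) + B * S`. If
`c • (B c - 1) → A` then `B c → 1`, so the attention term `S c` tends to its value at `B = 1`, and
each layer adds `σ (Z lᵀ * Z l)` to the first-order coefficient. -/

theorem tendsto_of_tendsto_smul_sub {E : Type*} [AddCommGroup E] [Module ℝ E]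
    [TopologicalSpace E] [IsTopologicalAddGroup E] [ContinuousSMul ℝ E]
    {f : ℝ → E} {x a : E} (h : Tendsto (fun c : ℝ => c • (f c - x)) atTop (𝓝 a)) :
    Tendsto f atTop (𝓝 x) := by
  have hlim : Tendsto (fun c : ℝ => x + c⁻¹ • (c • (f c - x))) atTop (𝓝 (x + (0 : ℝ) • a)) :=
    tendsto_const_nhds.add (tendsto_inv_atTop_zero.smul h)
  rw [zero_smul, add_zero] at hlim
  refine hlim.congr' ?_
  filter_upwards [eventually_ne_atTop (0 : ℝ)] with c hc
  rw [smul_smul, inv_mul_cancel₀ hc, one_smul, add_sub_cancel]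

theorem tendsto_smul_mul_one_add_inv_smul_sub_one {R : Type*} [Ring R] [Algebra ℝ R]
    [TopologicalSpace R] [IsTopologicalRing R] [ContinuousSMul ℝ R]
    {B S : ℝ → R} {A S₀ : R} (hB : Tendsto (fun c : ℝ => c • (B c - 1)) atTop (𝓝 A))
    (hS : Tendsto S atTop (𝓝 S₀)) :
    Tendsto (fun c : ℝ => c • (B c * (1 + c⁻¹ • S c) - 1)) atTop (𝓝 (A + S₀)) := by
  have hlim : Tendsto (fun c : ℝ => c • (B c - 1) + B c * S c) atTop (𝓝 (A + 1 * S₀)) :=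
    hB.add ((tendsto_of_tendsto_smul_sub hB).mul hS)
  rw [one_mul] at hlim
  refine hlim.congr' ?_
  filter_upwards [eventually_ne_atTop (0 : ℝ)] with c hc
  rw [mul_add, mul_one, mul_smul_comm, add_sub_right_comm, smul_add, smul_smul,
    mul_inv_cancel₀ hc, one_smul]

theorem tendsto_smul_mixBskip_sub_one {M : ℕ}
    {σ : Matrix (Fin M) (Fin M) ℝ → Matrix (Fin M) (Fin M) ℝ} (hσ : Continuous σ)
    (P : ℕ → ℕ) (Z : (l : ℕ) → Matrix (Fin (P l)) (Fin M) ℝ) (l : ℕ) :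
    Tendsto (fun c : ℝ => c • (mixBskip M c σ P Z l - 1)) atTop
      (𝓝 (∑ l' ∈ Finset.Icc 1 l, σ ((Z l')ᵀ * Z l'))) := by
  induction l with
  | zero => simp [mixBskip]
  | succ l ih =>
    have hattn : Continuous fun X : Matrix (Fin M) (Fin M) ℝ =>
        σ (Xᵀ * (Z (l + 1))ᵀ * Z (l + 1) * X) := by
      fun_prop
    have hS := (hattn.tendsto 1).comp (tendsto_of_tendsto_smul_sub ih)
    simp only [Function.comp_def, transpose_one, Matrix.one_mul, Matrix.mul_one] at hS
    rw [Finset.sum_Icc_succ_top (Nat.le_add_left 1 l)]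
    exact tendsto_smul_mul_one_add_inv_smul_sub_one ih hS

theorem mixB_strong_skip_limit_general (M L : ℕ)
    (σ : Matrix (Fin M) (Fin M) ℝ → Matrix (Fin M) (Fin M) ℝ) (hσ : ContDiff ℝ 1 σ)
    (P : ℕ → ℕ) (Z : (l : ℕ) → Matrix (Fin (P l)) (Fin M) ℝ) :
    ∀ l, 1 ≤ l → l ≤ L - 1 →
      Filter.Tendsto (fun c : ℝ => c • (mixBskip M c σ P Z l - 1)) Filter.atTop
        (nhds (∑ l' ∈ Finset.Icc 1 l, σ ((Z l')ᵀ * Z l'))) :=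
  fun l _ _ => tendsto_smul_mixBskip_sub_one hσ.continuous P Z l

/-- Strong-skip-connection expansion: for every `1 ≤ l ≤ L−1`,
`lim_{c→∞} c·(B^l_c − I_M) = Σ_{l'=1}^{l} σ(Z_{l'}ᵀ Z_{l'})`. -/
theorem mixB_strong_skip_limit (M L : ℕ) (hM : 1 ≤ M) (hL : 1 ≤ L)
    (σ : Matrix (Fin M) (Fin M) ℝ → Matrix (Fin M) (Fin M) ℝ) (hσ : ContDiff ℝ 1 σ)
    (P : ℕ → ℕ) (Z : (l : ℕ) → Matrix (Fin (P l)) (Fin M) ℝ) :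
    ∀ l, 1 ≤ l → l ≤ L - 1 →
      Filter.Tendsto (fun c : ℝ => c • (mixBskip M c σ P Z l - 1)) Filter.atTop
        (nhds (∑ l' ∈ Finset.Icc 1 l, σ ((Z l')ᵀ * Z l'))) :=
  mixB_strong_skip_limit_general M L σ hσ P Z
end
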